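/- Let ν be a Lévy measure, n a positive integer and h = 1/n. Then for every square-summable grid function φ : ℤ → ℝ (identified with a function on the grid hℤ via j ↦ φ(j) at the point jh), one has ⟨J^hφ, φ⟩_{ℓ²} = h Σ_{j∈ℤ} (J^hφ)(j) · φ(j) ≤ 0, where J^h = J_1^h + J_2^h acts on grid functions by (J_1^hφ)(j) = Σ_{k∈𝔸_h} ζ_k^h Σ_{l=0}^{|k|−1} θ_k^l · (φ(j + s_k l + 1) − 2φ(j + s_k l) + φ(j + s_k l − 1))/h² and (J_2^hφ)(j) = Σ_{k∈𝔹_h} (φ(j+k) − φ(j)) ν(B_k^h). -/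

import Mathlib

/-!
Write `T(m) = ∑ⱼ φ(j + m) φ(j)` for the autocorrelation of `φ`; it is even and, by
`2ab ≤ a² + b²`, maximal at `m = 0`. Pairing the second difference of `φ` at `j + a` with `φ(j)`
gives the second difference of `T` at `a`. Since `θ_k^l = (2m - 2l - 1) / (2m²)` with `m = |k|` is
affine in `l`, summation by parts turns the `k`-th term of `⟨J₁φ, φ⟩` into `ζ_k / h²` times
`((T(m) - T(0)) + (T(m - 1) - T(0)) + (2m - 1)(T(1) - T(0))) / (2m²) ≤ 0`.
After an exchange of summations `⟨J₂φ, φ⟩ = ∑_{|k| > n} ν(B_k) (T(k) - T(0)) ≤ 0`; the exchange is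
justified because the cells `B_k`, `|k| > n`, are disjoint subsets of `{|z| ≥ 1}`, which has finite
`ν`-measure.
-/

open MeasureTheory

/-- The grid cell `B_k^h`: for `k ≥ 1` it is `((k−1)h, kh]`, for `k ≤ −1` it is `[kh, (k+1)h)`. -/
noncomputable def levyCell (h : ℝ) (k : ℤ) : Set ℝ :=
  if 0 < k then Set.Ioc (((k : ℝ) - 1) * h) ((k : ℝ) * h)
  else Set.Ico ((k : ℝ) * h) (((k : ℝ) + 1) * h)

/-- `ζ_k^h = ∫_{B_k^h} z² ν(dz)`. -/
noncomputable def zetah (ν : Measure ℝ) (h : ℝ) (k : ℤ) : ℝ := ∫ z in levyCell h k, z ^ 2 ∂ν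

/-- `θ_k^l = ∫_{l/|k|}^{(l+1)/|k|} (1−θ) dθ`. -/
noncomputable def thetaW (k : ℤ) (l : ℕ) : ℝ :=
  ∫ θ in ((l : ℝ) / (k.natAbs : ℝ))..(((l : ℝ) + 1) / (k.natAbs : ℝ)), (1 - θ)

/-- `s_k = k/|k|`, as an integer shift direction. -/
def sgnZ (k : ℤ) : ℤ := if 0 < k then 1 else -1

/-- The grid operator `J_1^h` acting on grid functions `φ : ℤ → ℝ`, with `h = 1/n`:
`(J_1^hφ)(j) = Σ_{k∈𝔸_h} ζ_k^h Σ_{l=0}^{|k|−1} θ_k^l (φ(j+s_k l+1) − 2φ(j+s_k l) + φ(j+s_k l−1))/h²`. -/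
noncomputable def J1hGrid (ν : Measure ℝ) (n : ℕ) (φ : ℤ → ℝ) (j : ℤ) : ℝ :=
  ∑ k ∈ (Finset.Icc (-(n : ℤ)) (n : ℤ)).erase 0, zetah ν (1 / n) k *
    ∑ l ∈ Finset.range k.natAbs,
      thetaW k l * ((φ (j + sgnZ k * l + 1) - 2 * φ (j + sgnZ k * l) + φ (j + sgnZ k * l - 1))
        / (1 / n : ℝ) ^ 2)

/-- The grid operator `J_2^h`, with `h = 1/n`:
`(J_2^hφ)(j) = Σ_{k∈𝔹_h} (φ(j+k) − φ(j)) ν(B_k^h)`. -/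
noncomputable def J2hGrid (ν : Measure ℝ) (n : ℕ) (φ : ℤ → ℝ) (j : ℤ) : ℝ :=
  ∑' k : ℤ, if (n : ℤ) < |k| then (φ (j + k) - φ j) * (ν (levyCell (1 / n) k)).toReal else 0

/-- `J^h = J_1^h + J_2^h` on grid functions. -/
noncomputable def JhGrid (ν : Measure ℝ) (n : ℕ) (φ : ℤ → ℝ) (j : ℤ) : ℝ :=
  J1hGrid ν n φ j + J2hGrid ν n φ j

open Finset

noncomputable def autocorr (φ : ℤ → ℝ) (m : ℤ) : ℝ := ∑' j, φ (j + m) * φ j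

def secondDiff (ψ : ℤ → ℝ) (a : ℤ) : ℝ := ψ (a + 1) - 2 * ψ a + ψ (a - 1)

lemma autocorr_neg (φ : ℤ → ℝ) (m : ℤ) : autocorr φ (-m) = autocorr φ m := by
  rw [autocorr, ← (Equiv.addRight m).tsum_eq]
  exact tsum_congr fun j => by simp [mul_comm]

section SquareSummable

variable {φ : ℤ → ℝ} (hφ : Summable fun j => φ j ^ 2)
include hφ

lemma summable_sq_comp_add_right (m : ℤ) : Summable fun j => φ (j + m) ^ 2 :=
  (Equiv.addRight m).summable_iff.mpr hφ

lemma summable_mul_comp_add_right (m : ℤ) : Summable fun j => φ (j + m) * φ j :=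
  Summable.of_norm_bounded (((summable_sq_comp_add_right hφ m).add hφ).div_const 2) fun j => by
    rw [Real.norm_eq_abs, abs_mul]
    nlinarith [sq_abs (φ (j + m)), sq_abs (φ j), sq_nonneg (|φ (j + m)| - |φ j|)]

lemma autocorr_le_autocorr_zero (m : ℤ) : autocorr φ m ≤ autocorr φ 0 := by
  have hmean : ∑' j, (φ (j + m) ^ 2 + φ j ^ 2) / 2 = autocorr φ 0 := by
    have hshift : ∑' j, φ (j + m) ^ 2 = ∑' j, φ j ^ 2 := (Equiv.addRight m).tsum_eq fun j => φ j ^ 2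
    rw [tsum_div_const, (summable_sq_comp_add_right hφ m).tsum_add hφ, hshift]
    simp [autocorr, sq]
  rw [← hmean]
  exact (summable_mul_comp_add_right hφ m).tsum_le_tsum
    (fun j => by nlinarith [sq_nonneg (φ (j + m) - φ j)])
    (((summable_sq_comp_add_right hφ m).add hφ).div_const 2)

lemma hasSum_secondDiff_mul (a : ℤ) :
    HasSum (fun j => secondDiff φ (j + a) * φ j) (secondDiff (autocorr φ) a) := by
  have h := (((summable_mul_comp_add_right hφ (a + 1)).hasSum.sub
    ((summable_mul_comp_add_right hφ a).hasSum.mul_left 2)).add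
    (summable_mul_comp_add_right hφ (a - 1)).hasSum)
  refine h.congr_fun fun j => ?_
  simp only [secondDiff, add_assoc, add_sub_assoc]
  ring

end SquareSummable

lemma secondDiff_neg {ψ : ℤ → ℝ} (hψ : ∀ m, ψ (-m) = ψ m) (a : ℤ) :
    secondDiff ψ (-a) = secondDiff ψ a := by
  simp only [secondDiff, show -a + 1 = -(a - 1) by ring, show -a - 1 = -(a + 1) by ring, hψ]
  ring

lemma sum_range_secondDiff (ψ : ℤ → ℝ) (m : ℕ) :
    ∑ l ∈ range m, secondDiff ψ l = (ψ m - ψ (m - 1)) - (ψ 0 - ψ (-1)) := by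
  have h := sum_range_sub (fun l : ℕ => ψ l - ψ (l - 1)) m
  push_cast at h
  rw [← h]
  refine sum_congr rfl fun l _ => ?_
  simp only [secondDiff, add_sub_cancel_right]
  ring

lemma sum_range_mul_secondDiff (ψ : ℤ → ℝ) (m : ℕ) :
    ∑ l ∈ range m, (2 * m - 2 * l - 1 : ℝ) * secondDiff ψ l
      = ψ m + ψ (m - 1) + (2 * m - 1) * ψ (-1) - (2 * m + 1) * ψ 0 := by
  induction m with
  | zero => simp
  | succ m ih =>
    have hweight : ∀ l : ℕ, (2 * ((m + 1 : ℕ) : ℝ) - 2 * l - 1) * secondDiff ψ l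
        = (2 * m - 2 * l - 1) * secondDiff ψ l + 2 * secondDiff ψ l := fun l => by
      push_cast; ring
    rw [sum_range_succ, sum_congr rfl fun l _ => hweight l, sum_add_distrib, ← mul_sum, ih,
      sum_range_secondDiff]
    simp only [secondDiff]
    push_cast
    ring_nf

lemma thetaW_eq {k : ℤ} (hk : k ≠ 0) (l : ℕ) :
    thetaW k l = (2 * k.natAbs - 2 * l - 1 : ℝ) / (2 * k.natAbs ^ 2) := by
  have hm : (k.natAbs : ℝ) ≠ 0 := by exact_mod_cast Int.natAbs_ne_zero.mpr hk
  rw [thetaW, intervalIntegral.integral_sub intervalIntegrable_const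
    (continuous_id'.intervalIntegrable _ _), intervalIntegral.integral_const, integral_id, smul_eq_mul]
  field_simp
  ring

lemma sum_thetaW_mul_secondDiff_nonpos {ψ : ℤ → ℝ} (heven : ∀ m, ψ (-m) = ψ m)
    (hmax : ∀ m, ψ m ≤ ψ 0) {k : ℤ} (hk : k ≠ 0) :
    ∑ l ∈ range k.natAbs, thetaW k l * secondDiff ψ l ≤ 0 := by
  set m := k.natAbs
  have hm1 : (1 : ℝ) ≤ m := by exact_mod_cast Int.natAbs_pos.mpr hk
  have hsum : ∑ l ∈ range m, thetaW k l * secondDiff ψ l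
      = ((ψ m - ψ 0) + (ψ (m - 1) - ψ 0) + (2 * m - 1) * (ψ 1 - ψ 0)) / (2 * m ^ 2) := by
    simp_rw [thetaW_eq hk, div_mul_eq_mul_div, ← sum_div]
    rw [sum_range_mul_secondDiff, heven 1]
    ring
  rw [hsum]
  refine div_nonpos_of_nonpos_of_nonneg ?_ (by positivity)
  nlinarith [hmax m, hmax (m - 1), hmax 1]

lemma secondDiff_sgnZ_mul {ψ : ℤ → ℝ} (heven : ∀ m, ψ (-m) = ψ m) (k a : ℤ) :
    secondDiff ψ (sgnZ k * a) = secondDiff ψ a := by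
  unfold sgnZ
  split_ifs
  · rw [one_mul]
  · rw [neg_one_mul, secondDiff_neg heven]

lemma zetah_nonneg (ν : Measure ℝ) (h : ℝ) (k : ℤ) : 0 ≤ zetah ν h k :=
  integral_nonneg fun z => sq_nonneg z

section J1

variable {φ : ℤ → ℝ} (hφ : Summable fun j => φ j ^ 2)
include hφ

lemma hasSum_J1hGrid_mul (ν : Measure ℝ) (n : ℕ) :
    HasSum (fun j => J1hGrid ν n φ j * φ j)
      (∑ k ∈ (Icc (-(n : ℤ)) n).erase 0, zetah ν (1 / n) k *
        ∑ l ∈ range k.natAbs,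
          thetaW k l * (secondDiff (autocorr φ) (sgnZ k * l) / (1 / n : ℝ) ^ 2)) := by
  refine (hasSum_sum fun k _ => (hasSum_sum fun (l : ℕ) _ =>
    ((hasSum_secondDiff_mul hφ (sgnZ k * l)).div_const _).mul_left (thetaW k l)).mul_left
      (zetah ν (1 / n) k)).congr_fun fun j => ?_
  simp only [J1hGrid, sum_mul, mul_assoc, div_mul_eq_mul_div]
  rfl

lemma exists_hasSum_J1hGrid_mul_nonpos (ν : Measure ℝ) (n : ℕ) :
    ∃ s ≤ 0, HasSum (fun j => J1hGrid ν n φ j * φ j) s := by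
  refine ⟨_, sum_nonpos fun k hk => ?_, hasSum_J1hGrid_mul hφ ν n⟩
  have heven : ∀ m, autocorr φ (-m) = autocorr φ m := autocorr_neg φ
  simp_rw [secondDiff_sgnZ_mul heven, mul_div_assoc', ← sum_div]
  exact mul_nonpos_of_nonneg_of_nonpos (zetah_nonneg ν _ k) (div_nonpos_of_nonpos_of_nonneg
    (sum_thetaW_mul_secondDiff_nonpos heven (autocorr_le_autocorr_zero hφ) (ne_of_mem_erase hk))
    (sq_nonneg _))

end J1

lemma hasSum_tsum_jump_mul {φ : ℤ → ℝ} (hφ : Summable fun j => φ j ^ 2) {w : ℤ → ℝ}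
    (hw : Summable w) :
    HasSum (fun j => (∑' k, (φ (j + k) - φ j) * w k) * φ j)
      (∑' k, w k * (autocorr φ k - autocorr φ 0)) := by
  set G : ℤ → ℤ → ℝ := fun k j => (φ (j + k) - φ j) * w k * φ j
  have hbound : ∀ k j, ‖G k j‖ ≤ |w k| * (φ (j + k) ^ 2 + 2 * φ j ^ 2) := fun k j => by
    rw [show G k j = w k * ((φ (j + k) - φ j) * φ j) by ring, norm_mul, Real.norm_eq_abs]
    gcongr
    rw [Real.norm_eq_abs, abs_le]
    constructor <;> nlinarith [sq_nonneg (φ (j + k) + φ j), sq_nonneg (φ (j + k) - φ j)]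
  have hfiber : ∀ k, HasSum (fun j => |w k| * (φ (j + k) ^ 2 + 2 * φ j ^ 2))
      (|w k| * (∑' j, φ j ^ 2 + 2 * ∑' j, φ j ^ 2)) := fun k => by
    have hshift : ∑' j, φ (j + k) ^ 2 = ∑' j, φ j ^ 2 := (Equiv.addRight k).tsum_eq fun j => φ j ^ 2
    simpa only [hshift] using
      ((summable_sq_comp_add_right hφ k).hasSum.add (hφ.hasSum.mul_left 2)).mul_left |w k|
  have hG : Summable (Function.uncurry G) := by
    refine Summable.of_norm_bounded ((summable_prod_of_nonneg fun _ => by positivity).mpr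
      ⟨fun k => (hfiber k).summable, ?_⟩) fun p => hbound p.1 p.2
    simpa only [(hfiber _).tsum_eq] using hw.abs.mul_right _
  have hrow : ∀ k, ∑' j, G k j = w k * (autocorr φ k - autocorr φ 0) := fun k => by
    refine (((summable_mul_comp_add_right hφ k).hasSum.sub
      (summable_mul_comp_add_right hφ 0).hasSum).mul_left (w k)).congr_fun (fun j => ?_) |>.tsum_eq
    simp only [G, add_zero]
    ring
  have hcol : ∀ j, (∑' k, (φ (j + k) - φ j) * w k) * φ j = ∑' k, G k j := fun j =>
    tsum_mul_right.symm
  simp_rw [hcol, ← hrow]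
  rw [← hG.tsum_comm]
  exact hG.prod_symm.prod.hasSum

lemma measurableSet_levyCell (h : ℝ) (k : ℤ) : MeasurableSet (levyCell h k) := by
  unfold levyCell
  split_ifs
  exacts [measurableSet_Ioc, measurableSet_Ico]

noncomputable def levyIndex (h z : ℝ) : ℤ := if 0 < z then ⌈z / h⌉ else ⌊z / h⌋

lemma levyIndex_eq_of_mem_levyCell {h z : ℝ} (hh : 0 < h) {k : ℤ} (hk : k ≠ 0)
    (hz : z ∈ levyCell h k) : levyIndex h z = k := by
  rcases hk.lt_or_gt with hk | hk
  · rw [levyCell, if_neg (by omega)] at hz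
    have hk1 : (k : ℝ) + 1 ≤ 0 := by exact_mod_cast hk
    rw [levyIndex, if_neg (by nlinarith [hz.2]), Int.floor_eq_iff, le_div_iff₀ hh,
      div_lt_iff₀ hh]
    exact hz
  · rw [levyCell, if_pos hk] at hz
    have hk1 : (0 : ℝ) ≤ k - 1 := by
      have : (1 : ℝ) ≤ k := by exact_mod_cast hk
      linarith
    rw [levyIndex, if_pos (by nlinarith [hz.1]), Int.ceil_eq_iff, lt_div_iff₀ hh, div_le_iff₀ hh]
    exact hz

lemma disjoint_levyCell {h : ℝ} (hh : 0 < h) {k k' : ℤ} (hk : k ≠ 0) (hk' : k' ≠ 0)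
    (hne : k ≠ k') : Disjoint (levyCell h k) (levyCell h k') :=
  Set.disjoint_left.mpr fun _ hz hz' =>
    hne ((levyIndex_eq_of_mem_levyCell hh hk hz).symm.trans
      (levyIndex_eq_of_mem_levyCell hh hk' hz'))

lemma levyCell_subset_one_le_abs {n : ℕ} (hn : 0 < n) {k : ℤ} (hk : (n : ℤ) < |k|) :
    levyCell (1 / n) k ⊆ {z | 1 ≤ |z|} := by
  have hn' : (0 : ℝ) < n := by exact_mod_cast hn
  intro z hz
  rw [Set.mem_ofPred_eq, le_abs]
  unfold levyCell at hz
  simp only [mul_one_div] at hz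
  split_ifs at hz with hk0
  · rw [abs_of_pos hk0] at hk
    have hnk : (n : ℝ) + 1 ≤ k := by exact_mod_cast hk
    exact Or.inl (((one_le_div hn').2 (by linarith)).trans hz.1.le)
  · rw [abs_of_nonpos (by omega)] at hk
    have hnk : (k : ℝ) + 1 ≤ -n := by exact_mod_cast (show k + 1 ≤ -(n : ℤ) by omega)
    have : ((k : ℝ) + 1) / n ≤ -1 := (div_le_iff₀ hn').2 (by linarith)
    exact Or.inr (by linarith [hz.2])

lemma measure_one_le_abs_lt_top {ν : Measure ℝ}
    (hνint : ∫⁻ z, ENNReal.ofReal (min 1 (z ^ 2)) ∂ν < ⊤) : ν {z | 1 ≤ |z|} < ⊤ := by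
  refine lt_of_le_of_lt ?_ hνint
  calc ν {z | 1 ≤ |z|} = ν {z | 1 ≤ ENNReal.ofReal (min 1 (z ^ 2))} := by
        simp [one_le_sq_iff_one_le_abs]
    _ ≤ ∫⁻ z, ENNReal.ofReal (min 1 (z ^ 2)) ∂ν := by
        simpa only [one_mul] using mul_meas_ge_le_lintegral₀ (μ := ν)
          (f := fun z => ENNReal.ofReal (min 1 (z ^ 2))) (by fun_prop) 1

lemma summable_levyCell_measure_toReal {ν : Measure ℝ}
    (hνint : ∫⁻ z, ENNReal.ofReal (min 1 (z ^ 2)) ∂ν < ⊤) {n : ℕ} (hn : 0 < n) :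
    Summable fun k : ℤ => if (n : ℤ) < |k| then (ν (levyCell (1 / n) k)).toReal else 0 := by
  set S : ℤ → Set ℝ := fun k => if (n : ℤ) < |k| then levyCell (1 / n) k else ∅
  have hS : ∀ k,
      (if (n : ℤ) < |k| then (ν (levyCell (1 / n) k)).toReal else 0) = (ν (S k)).toReal := fun k => by split_ifs <;> simp [S, *]
  have hmeas : ∀ k, MeasurableSet (S k) := fun k => by
    simp only [S]
    split_ifs
    exacts [measurableSet_levyCell _ _, MeasurableSet.empty]
  have hdisj : Pairwise (Function.onFun Disjoint S) := fun k k' hne => by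
    simp only [Function.onFun, S]
    split_ifs with hk hk'
    · exact disjoint_levyCell (by positivity) (abs_pos.mp (by omega)) (abs_pos.mp (by omega)) hne
    all_goals simp
  have hsub : (⋃ k, S k) ⊆ {z | 1 ≤ |z|} := Set.iUnion_subset fun k => by
    simp only [S]
    split_ifs with hk
    exacts [levyCell_subset_one_le_abs hn hk, Set.empty_subset _]
  simp only [hS]
  exact ENNReal.summable_toReal ((tsum_meas_le_meas_iUnion_of_disjoint ν hmeas hdisj).trans
    (measure_mono hsub) |>.trans_lt (measure_one_le_abs_lt_top hνint)).ne

lemma exists_hasSum_J2hGrid_mul_nonpos {ν : Measure ℝ}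
    (hνint : ∫⁻ z, ENNReal.ofReal (min 1 (z ^ 2)) ∂ν < ⊤) {n : ℕ} (hn : 0 < n)
    {φ : ℤ → ℝ} (hφ : Summable fun j => φ j ^ 2) :
    ∃ s ≤ 0, HasSum (fun j => J2hGrid ν n φ j * φ j) s := by
  set w : ℤ → ℝ := fun k => if (n : ℤ) < |k| then (ν (levyCell (1 / n) k)).toReal else 0
  have hw0 : ∀ k, 0 ≤ w k := fun k => by
    simp only [w]
    split_ifs
    exacts [ENNReal.toReal_nonneg, le_rfl]
  have hJ2 : ∀ j, J2hGrid ν n φ j = ∑' k, (φ (j + k) - φ j) * w k := fun j => by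
    simp only [J2hGrid, w, mul_ite, mul_zero]
  refine ⟨_, tsum_nonpos fun k => ?_, by
    simpa only [hJ2] using hasSum_tsum_jump_mul hφ (summable_levyCell_measure_toReal hνint hn)⟩
  exact mul_nonpos_of_nonneg_of_nonpos (hw0 k) (sub_nonpos.mpr (autocorr_le_autocorr_zero hφ k))

theorem JhGrid_negative_semidefinite_general
    (ν : Measure ℝ)
    (hνint : ∫⁻ z, ENNReal.ofReal (min 1 (z ^ 2)) ∂ν < ⊤)
    (n : ℕ) (hn : 0 < n)
    (φ : ℤ → ℝ) (hφ : Summable fun j : ℤ => φ j ^ 2) :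
    (1 / n : ℝ) * ∑' j : ℤ, JhGrid ν n φ j * φ j ≤ 0 := by
  obtain ⟨s₁, hs₁, h₁⟩ := exists_hasSum_J1hGrid_mul_nonpos hφ ν n
  obtain ⟨s₂, hs₂, h₂⟩ := exists_hasSum_J2hGrid_mul_nonpos hνint hn hφ
  have h : HasSum (fun j => JhGrid ν n φ j * φ j) (s₁ + s₂) := by
    simpa only [JhGrid, add_mul] using h₁.add h₂
  rw [h.tsum_eq]
  exact mul_nonpos_of_nonneg_of_nonpos (by positivity) (add_nonpos hs₁ hs₂)

/-- Negative semi-definiteness of `J^h` on `ℓ²(hℤ)`: for every square-summable grid function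
`φ : ℤ → ℝ`, `⟨J^hφ, φ⟩_{ℓ²} = h Σ_j (J^hφ)(j) φ(j) ≤ 0`. -/
theorem JhGrid_negative_semidefinite
    (ν : Measure ℝ) (hν0 : ν {0} = 0)
    (hνint : ∫⁻ z, ENNReal.ofReal (min 1 (z ^ 2)) ∂ν < ⊤)
    (n : ℕ) (hn : 0 < n)
    (φ : ℤ → ℝ) (hφ : Summable fun j : ℤ => φ j ^ 2) :
    (1 / n : ℝ) * ∑' j : ℤ, JhGrid ν n φ j * φ j ≤ 0 :=
  JhGrid_negative_semidefinite_general ν hνint n hn φ hφ
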